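/- arXiv:0905.0762 — 2 statements merged into one kernel-verified Lean document; each statement's English description precedes it below -/
import Mathlib

section
/- In the untyped symmetric λμ-calculus with the μμ′-reduction: if (M N) ▷* μα P, then either M ▷* μα M₁ for some M₁ with M₁[α=_r N] ▷* P, or N ▷* μα N₁ for some N₁ with N₁[α=_l M] ▷* P. -/
namespace SymLM

/-- Terms of the symmetric λμ-calculus :
T ::= x | λx T | (T T) | μα T | (α T).
λ-variables and μ-variables are two disjoint namespaces, both indexed by ℕ. -/
inductive Lam : Type
| var : ℕ → Lam          -- λ-variable x
| lam : ℕ → Lam → Lam    -- λx M (binds the λ-variable x)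
| app : Lam → Lam → Lam  -- (M N)
| mu  : ℕ → Lam → Lam    -- μα M (binds the μ-variable α)
| name : ℕ → Lam → Lam   -- (α M)

/-- β-substitution M[x:=N] of a term for a λ-variable. -/
def subst : Lam → ℕ → Lam → Lam
| .var y, x, N => if y = x then N else .var y
| .lam y M, x, N => if y = x then .lam y M else .lam y (subst M x N)
| .app M P, x, N => .app (subst M x N) (subst P x N)
| .mu b M, x, N => .mu b (subst M x N)
| .name b M, x, N => .name b (subst M x N)

/-- Direction of a μμ′-substitution: `r` for [α=_r N], `l` for [α=_l N]. -/
inductive Dir : Type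
| l | r

/-- μμ′-substitution: `msubst M α .r N` is M[α=_r N], obtained by replacing each
subterm (α U) of M by (α (U N)); `msubst M α .l N` is M[α=_l N], replacing (α U)
by (α (N U)). -/
def msubst : Lam → ℕ → Dir → Lam → Lam
| .var y, _, _, _ => .var y
| .lam y M, a, d, N => .lam y (msubst M a d N)
| .app M P, a, d, N => .app (msubst M a d N) (msubst P a d N)
| .mu b M, a, d, N => if b = a then .mu b M else .mu b (msubst M a d N)
| .name b M, a, d, N =>
    if b = a then
      match d with
      | .r => .name b (.app (msubst M a d N) N)
      | .l => .name b (.app N (msubst M a d N))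
    else .name b (msubst M a d N)

/-- Simultaneous μμ′-substitution for a partial assignment σ of directions and
terms to μ-variables. -/
def smsubst : (ℕ → Option (Dir × Lam)) → Lam → Lam
| _, .var y => .var y
| σ, .lam y M => .lam y (smsubst σ M)
| σ, .app M P => .app (smsubst σ M) (smsubst σ P)
| σ, .mu b M => .mu b (smsubst (fun c => if c = b then none else σ c) M)
| σ, .name b M =>
    match σ b with
    | some (.r, N) => .name b (.app (smsubst σ M) N)
    | some (.l, N) => .name b (.app N (smsubst σ M))
    | none => .name b (smsubst σ M)

/-- The simultaneous μμ′-substitution [α₁=_{s₁}P₁, ..., α_n=_{s_n}P_n] given as a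
finite list of bindings. -/
def applyM (σ : List (ℕ × Dir × Lam)) (M : Lam) : Lam :=
  smsubst (fun a => σ.lookup a) M

/-- Simultaneous β-substitution for a partial assignment σ of terms to λ-variables. -/
def ssubst : (ℕ → Option Lam) → Lam → Lam
| σ, .var y => (σ y).getD (.var y)
| σ, .lam y M => .lam y (ssubst (fun z => if z = y then none else σ z) M)
| σ, .app M P => .app (ssubst σ M) (ssubst σ P)
| σ, .mu b M => .mu b (ssubst σ M)
| σ, .name b M => .name b (ssubst σ M)

/-- The simultaneous β-substitution [x₁:=N₁, ..., x_k:=N_k] given as a finite list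
of bindings. -/
def applyS (σ : List (ℕ × Lam)) (M : Lam) : Lam :=
  ssubst (fun x => σ.lookup x) M

/-- The iterated application (M P₁ ... P_n). -/
def appList (M : Lam) (l : List Lam) : Lam := l.foldl .app M

/-- Root rule (β) : (λx M N) ▷ M[x:=N]. -/
inductive BetaR : Lam → Lam → Prop
| mk (x : ℕ) (M N : Lam) : BetaR (.app (.lam x M) N) (subst M x N)

/-- Root rule (μ) : (μα M N) ▷ μα M[α=_r N]. -/
inductive MuR : Lam → Lam → Prop
| mk (α : ℕ) (M N : Lam) : MuR (.app (.mu α M) N) (.mu α (msubst M α .r N))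

/-- Root rule (μ′) : (N μα M) ▷ μα M[α=_l N]. -/
inductive MuPR : Lam → Lam → Prop
| mk (α : ℕ) (M N : Lam) : MuPR (.app N (.mu α M)) (.mu α (msubst M α .l N))

/-- One-step reduction: closure of a set `R` of root rules under all contexts. -/
inductive Step (R : Lam → Lam → Prop) : Lam → Lam → Prop
| base {M M'} : R M M' → Step R M M'
| appL {M M' N} : Step R M M' → Step R (.app M N) (.app M' N)
| appR {M N N'} : Step R N N' → Step R (.app M N) (.app M N')
| lam {x M M'} : Step R M M' → Step R (.lam x M) (.lam x M')
| mu {α M M'} : Step R M M' → Step R (.mu α M) (.mu α M')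
| name {α M M'} : Step R M M' → Step R (.name α M) (.name α M')

/-- The root rules of the μμ′-reduction. -/
def mmR : Lam → Lam → Prop := fun M N => MuR M N ∨ MuPR M N

/-- The root rules of the βμμ′-reduction. -/
def bmmR : Lam → Lam → Prop := fun M N => BetaR M N ∨ MuR M N ∨ MuPR M N

/-- `a` is strongly normalizing for the reduction `r` : no infinite `r`-reduction
sequence starts from `a` (accessibility for the reversed relation). -/
def SN {α : Type} (r : α → α → Prop) (a : α) : Prop :=
  Acc (fun x y => r y x) a

/-- Types of the simply typed symmetric λμ-calculus: atoms, ⊥ and A → B. -/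
inductive Ty : Type
| atom : ℕ → Ty
| bot : Ty
| arrow : Ty → Ty → Ty

/-- ¬A abbreviates A → ⊥. -/
def Ty.neg (A : Ty) : Ty := Ty.arrow A Ty.bot

/-- Typing judgment Γ ⊢ M : A.  The context is given by `Γ : ℕ → Ty` for the
λ-variables and `Δ : ℕ → Ty` for the μ-variables, where `Δ α = A` means that the
declaration α : ¬A occurs in the context. -/
inductive Typed : (ℕ → Ty) → (ℕ → Ty) → Lam → Ty → Prop
| var {Γ Δ x A} : Γ x = A → Typed Γ Δ (.var x) A
| lam {Γ Δ x M A B} : Typed (Function.update Γ x A) Δ M B →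
    Typed Γ Δ (.lam x M) (.arrow A B)
| app {Γ Δ M N A B} : Typed Γ Δ M (.arrow A B) → Typed Γ Δ N A →
    Typed Γ Δ (.app M N) B
| mu {Γ Δ α M A} : Typed Γ (Function.update Δ α A) M .bot →
    Typed Γ Δ (.mu α M) A
| name {Γ Δ α M A} : Typed Γ Δ M A → Δ α = A → Typed Γ Δ (.name α M) .bot

/-!
Follow a reduction of `(M N)` to `μα P`. As long as the head is an application, each step
happens inside `M` or inside `N`; eventually a root `(μ)` or `(μ′)` step fires, producing
`μα M₁[α=_r N']` or `μα N₁[α=_l M']`, and from then on the term stays a `μα`-abstraction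
reducing only under the binder. Steps that the other side took before the root step are moved
after it, because `M₁[α=_r ·]` and `N₁[α=_l ·]` are monotone in the substituted term.
-/

open Relation

section Context

variable {R : Lam → Lam → Prop}

lemma reflTransGen_appL {M M' N : Lam} (h : ReflTransGen (Step R) M M') :
    ReflTransGen (Step R) (.app M N) (.app M' N) :=
  h.lift (fun X => Lam.app X N) fun _ _ => Step.appL

lemma reflTransGen_appR {M N N' : Lam} (h : ReflTransGen (Step R) N N') :
    ReflTransGen (Step R) (.app M N) (.app M N') :=
  h.lift (fun X => Lam.app M X) fun _ _ => Step.appR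

lemma reflTransGen_lam {x : ℕ} {M M' : Lam} (h : ReflTransGen (Step R) M M') :
    ReflTransGen (Step R) (.lam x M) (.lam x M') :=
  h.lift (Lam.lam x) fun _ _ => Step.lam

lemma reflTransGen_mu {a : ℕ} {M M' : Lam} (h : ReflTransGen (Step R) M M') :
    ReflTransGen (Step R) (.mu a M) (.mu a M') :=
  h.lift (Lam.mu a) fun _ _ => Step.mu

lemma reflTransGen_name {a : ℕ} {M M' : Lam} (h : ReflTransGen (Step R) M M') :
    ReflTransGen (Step R) (.name a M) (.name a M') :=
  h.lift (Lam.name a) fun _ _ => Step.name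

lemma reflTransGen_mu_inv (hR : ∀ a X T, ¬ R (.mu a X) T) {a : ℕ} {X T : Lam}
    (h : ReflTransGen (Step R) (.mu a X) T) :
    ∃ X', T = .mu a X' ∧ ReflTransGen (Step R) X X' := by
  induction h with
  | refl => exact ⟨X, rfl, .refl⟩
  | tail _ s ih =>
    obtain ⟨X', rfl, hX⟩ := ih
    cases s with
    | base r => exact absurd r (hR _ _ _)
    | mu s => exact ⟨_, rfl, hX.tail s⟩

lemma msubst_reflTransGen_of_step (X : Lam) (a : ℕ) (d : Dir) {N N' : Lam}
    (s : Step R N N') : ReflTransGen (Step R) (msubst X a d N) (msubst X a d N') := by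
  induction X with
  | var y => exact .refl
  | lam y Y ih => exact reflTransGen_lam ih
  | app Y Z ihY ihZ => exact (reflTransGen_appL ihY).trans (reflTransGen_appR ihZ)
  | mu b Y ih =>
    by_cases hb : b = a
    · simpa only [msubst, if_pos hb] using .refl
    · simpa only [msubst, if_neg hb] using reflTransGen_mu ih
  | name b Y ih =>
    by_cases hb : b = a
    · subst hb
      cases d with
      | r =>
        simpa only [msubst, ↓reduceIte] using reflTransGen_name
          ((reflTransGen_appL ih).trans (reflTransGen_appR (.single s)))
      | l =>
        simpa only [msubst, ↓reduceIte] using reflTransGen_name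
          ((reflTransGen_appR ih).trans (reflTransGen_appL (.single s)))
    · simpa only [msubst, if_neg hb] using reflTransGen_name ih

end Context

lemma not_mmR_mu (a : ℕ) (X T : Lam) : ¬ mmR (.mu a X) T := by
  rintro (r | r) <;> cases r

def MuSplit (R : Lam → Lam → Prop) (M N : Lam) (α : ℕ) (P : Lam) : Prop :=
  (∃ M₁ : Lam, ReflTransGen (Step R) M (.mu α M₁) ∧
    ReflTransGen (Step R) (msubst M₁ α .r N) P) ∨
  (∃ N₁ : Lam, ReflTransGen (Step R) N (.mu α N₁) ∧
    ReflTransGen (Step R) (msubst N₁ α .l M) P)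

namespace MuSplit

variable {R : Lam → Lam → Prop} {M N : Lam} {α : ℕ} {P : Lam}

lemma head_left {M' : Lam} (s : Step R M M') (h : MuSplit R M' N α P) : MuSplit R M N α P := by
  rcases h with ⟨M₁, hM, hP⟩ | ⟨N₁, hN, hP⟩
  · exact .inl ⟨M₁, .head s hM, hP⟩
  · exact .inr ⟨N₁, hN, (msubst_reflTransGen_of_step N₁ α .l s).trans hP⟩

lemma head_right {N' : Lam} (s : Step R N N') (h : MuSplit R M N' α P) : MuSplit R M N α P := by
  rcases h with ⟨M₁, hM, hP⟩ | ⟨N₁, hN, hP⟩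
  · exact .inl ⟨M₁, hM, (msubst_reflTransGen_of_step M₁ α .r s).trans hP⟩
  · exact .inr ⟨N₁, .head s hN, hP⟩

lemma of_mmR {T : Lam} (r : mmR (.app M N) T) (h : ReflTransGen (Step mmR) T (.mu α P)) :
    MuSplit mmR M N α P := by
  rcases r with ⟨_, M₁, _⟩ | ⟨_, N₁, _⟩
  · obtain ⟨X, hX, hP⟩ := reflTransGen_mu_inv not_mmR_mu h
    obtain ⟨rfl, rfl⟩ := Lam.mu.inj hX
    exact .inl ⟨M₁, .refl, hP⟩
  · obtain ⟨X, hX, hP⟩ := reflTransGen_mu_inv not_mmR_mu h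
    obtain ⟨rfl, rfl⟩ := Lam.mu.inj hX
    exact .inr ⟨N₁, .refl, hP⟩

end MuSplit

/-- with the μμ′-reduction, if (M N) ▷* μα P then either M ▷* μα M₁ with
M₁[α=_r N] ▷* P, or N ▷* μα N₁ with N₁[α=_l M] ▷* P. -/
theorem app_red_to_mu :
    ∀ (M N P : Lam) (α : ℕ),
      Relation.ReflTransGen (Step mmR) (.app M N) (.mu α P) →
      (∃ M₁ : Lam, Relation.ReflTransGen (Step mmR) M (.mu α M₁) ∧
        Relation.ReflTransGen (Step mmR) (msubst M₁ α .r N) P) ∨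
      (∃ N₁ : Lam, Relation.ReflTransGen (Step mmR) N (.mu α N₁) ∧
        Relation.ReflTransGen (Step mmR) (msubst N₁ α .l M) P) := by
  intro M N P α h
  show MuSplit mmR M N α P
  generalize hT : Lam.app M N = T at h
  induction h using ReflTransGen.head_induction_on generalizing M N with
  | refl => cases hT
  | head s h ih =>
    subst hT
    cases s with
    | base r => exact MuSplit.of_mmR r h
    | appL s => exact (ih _ _ rfl).head_left s
    | appR s => exact (ih _ _ rfl).head_right s

end SymLM
end

section
/- In the untyped symmetric λμ-calculus with the μμ′-reduction: if M and N are strongly normalizing but the application (M N) is not strongly normalizing, then either M ▷* μα M₁ for some M₁ with M₁[α=_r N] not strongly normalizing, or N ▷* μβ N₁ for some N₁ with N₁[β=_l M] not strongly normalizing. -/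
namespace SymLM

section Aux

open Relation

lemma sn_of_step {α : Type} {r : α → α → Prop} {x y : α} (h : SN r x) (s : r x y) :
    SN r y := h.inv s

lemma sn_of_rtg {α : Type} {r : α → α → Prop} {x y : α} (h : SN r x)
    (hr : Relation.ReflTransGen r x y) : SN r y := by
  induction hr with
  | refl => exact h
  | tail _ s ih => exact sn_of_step ih s

lemma rtg_appL {R} {M M' N : Lam} (h : ReflTransGen (Step R) M M') :
    ReflTransGen (Step R) (.app M N) (.app M' N) :=
  h.lift (fun x => Lam.app x N) (fun _ _ s => Step.appL s)

lemma rtg_appR {R} {M N N' : Lam} (h : ReflTransGen (Step R) N N') :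
    ReflTransGen (Step R) (.app M N) (.app M N') :=
  h.lift (fun x => Lam.app M x) (fun _ _ s => Step.appR s)

lemma rtg_lam {R} {x : ℕ} {M M' : Lam} (h : ReflTransGen (Step R) M M') :
    ReflTransGen (Step R) (.lam x M) (.lam x M') :=
  h.lift (fun y => Lam.lam x y) (fun _ _ s => Step.lam s)

lemma rtg_mu {R} {a : ℕ} {M M' : Lam} (h : ReflTransGen (Step R) M M') :
    ReflTransGen (Step R) (.mu a M) (.mu a M') :=
  h.lift (fun y => Lam.mu a y) (fun _ _ s => Step.mu s)

lemma rtg_name {R} {a : ℕ} {M M' : Lam} (h : ReflTransGen (Step R) M M') :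
    ReflTransGen (Step R) (.name a M) (.name a M') :=
  h.lift (fun y => Lam.name a y) (fun _ _ s => Step.name s)

lemma step_mu_inv {a : ℕ} {M Y : Lam} (h : Step mmR (.mu a M) Y) :
    ∃ M', Y = .mu a M' ∧ Step mmR M M' := by
  cases h with
  | base hb => rcases hb with h | h <;> cases h
  | mu hs => exact ⟨_, rfl, hs⟩

lemma sn_mu {a : ℕ} {M : Lam} (h : SN (Step mmR) M) : SN (Step mmR) (.mu a M) := by
  induction h with
  | intro M _ ih =>
    constructor
    intro Y hY
    obtain ⟨M', rfl, hs⟩ := step_mu_inv hY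
    exact ih M' hs

lemma not_sn_mu {a : ℕ} {M : Lam} (h : ¬ SN (Step mmR) (.mu a M)) :
    ¬ SN (Step mmR) M := fun hx => h (sn_mu hx)

lemma msubst_rtg_step {N N' : Lam} (s : Step mmR N N') :
    ∀ (P : Lam) (a : ℕ) (d : Dir),
      ReflTransGen (Step mmR) (msubst P a d N) (msubst P a d N') := by
  intro P
  induction P with
  | var y => intro a d; exact .refl
  | lam x M ih => intro a d; exact rtg_lam (ih a d)
  | app M P ihM ihP =>
    intro a d
    exact .trans (rtg_appL (ihM a d)) (rtg_appR (ihP a d))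
  | mu b M ih =>
    intro a d
    by_cases hb : b = a
    · simp only [msubst, if_pos hb]
      exact .refl
    · simp only [msubst, if_neg hb]
      exact rtg_mu (ih a d)
  | name b M ih =>
    intro a d
    by_cases hb : b = a
    · cases d with
      | r =>
        simp only [msubst, if_pos hb]
        exact .trans (rtg_name (rtg_appL (ih a .r)))
          (ReflTransGen.single (Step.name (Step.appR s)))
      | l =>
        simp only [msubst, if_pos hb]
        exact .trans (rtg_name (rtg_appR (ih a .l)))
          (ReflTransGen.single (Step.name (Step.appL s)))
    · simp only [msubst, if_neg hb]
      exact rtg_name (ih a d)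

lemma app_not_SN_cases_aux :
    ∀ M : Lam, SN (Step mmR) M → ∀ N : Lam, SN (Step mmR) N →
      ¬ SN (Step mmR) (.app M N) →
      (∃ (α : ℕ) (M₁ : Lam), Relation.ReflTransGen (Step mmR) M (.mu α M₁) ∧
        ¬ SN (Step mmR) (msubst M₁ α .r N)) ∨
      (∃ (β : ℕ) (N₁ : Lam), Relation.ReflTransGen (Step mmR) N (.mu β N₁) ∧
        ¬ SN (Step mmR) (msubst N₁ β .l M)) := by
  intro M hM
  induction hM with
  | intro M hMa ihM =>
    intro N hN
    induction hN with
    | intro N hNa ihN =>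
      intro hnot
      have hex : ∃ Y, Step mmR (.app M N) Y ∧ ¬ SN (Step mmR) Y := by
        by_contra hc
        push_neg at hc
        exact hnot (Acc.intro _ (fun Y hY => hc Y hY))
      obtain ⟨Y, hs, hbad⟩ := hex
      cases hs with
      | base hb =>
        rcases hb with h | h
        · cases h with
          | mk α M₀ N₀ =>
            exact Or.inl ⟨α, M₀, .refl, not_sn_mu hbad⟩
        · cases h with
          | mk α M₀ N₀ =>
            exact Or.inr ⟨α, M₀, .refl, not_sn_mu hbad⟩
      | appL hstep =>
        rename_i M'
        rcases ihM M' hstep N (Acc.intro _ hNa) hbad with ⟨α, M₁, red, h⟩ | ⟨β, N₁, red, h⟩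
        · exact Or.inl ⟨α, M₁, .head hstep red, h⟩
        · refine Or.inr ⟨β, N₁, red, fun hsn => h ?_⟩
          exact sn_of_rtg hsn (msubst_rtg_step hstep N₁ β .l)
      | appR hstep =>
        rename_i N'
        rcases ihN N' hstep hbad with ⟨α, M₁, red, h⟩ | ⟨β, N₁, red, h⟩
        · refine Or.inl ⟨α, M₁, red, fun hsn => h ?_⟩
          exact sn_of_rtg hsn (msubst_rtg_step hstep M₁ α .r)
        · exact Or.inr ⟨β, N₁, .head hstep red, h⟩

end Aux

/-- with the μμ′-reduction, if M and N are SN but (M N) is not, then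
either M ▷* μα M₁ with M₁[α=_r N] not SN, or N ▷* μβ N₁ with N₁[β=_l M] not SN. -/
theorem app_not_SN_cases :
    ∀ M N : Lam, SN (Step mmR) M → SN (Step mmR) N → ¬ SN (Step mmR) (.app M N) →
      (∃ (α : ℕ) (M₁ : Lam), Relation.ReflTransGen (Step mmR) M (.mu α M₁) ∧
        ¬ SN (Step mmR) (msubst M₁ α .r N)) ∨
      (∃ (β : ℕ) (N₁ : Lam), Relation.ReflTransGen (Step mmR) N (.mu β N₁) ∧
        ¬ SN (Step mmR) (msubst N₁ β .l M)) :=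
  fun M N hM hN => app_not_SN_cases_aux M hM N hN

end SymLM
end
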